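/- (Generalized Snell's law, cosine form.) Let 1 < p_i, p_j < +∞, let ω_i, ω_j > 0, let F ⊆ ℝ^d be a polytope, and let a, c ∈ ℝ^d with a ∉ F and c ∉ F. Suppose b minimizes y ↦ ω_i‖y − a‖_{p_i} + ω_j‖c − y‖_{p_j} over y ∈ F, and let F_b be the face of F such that b ∈ relint(F_b). Then for every nonzero vector v ∈ L(aff(F_b)): ω_i ‖v‖_{p_i} cos φ_{p_i°}((b − a)°, v) = ω_j ‖v‖_{p_j} cos φ_{p_j°}((c − b)°, v), where the polar vectors are taken with respect to p_i and p_j respectively; equivalently, ω_i ‖v‖_{p_i} cos φ_{p_i}(v, (b − a)°) = ω_j ‖v‖_{p_j} cos φ_{p_j}(v, (c − b)°). -/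

import Mathlib

open scoped BigOperators

/-- The ℓ_p norm on ℝ^d for a real exponent p. -/
noncomputable def lpnorm {d : ℕ} (p : ℝ) (x : Fin d → ℝ) : ℝ :=
  (∑ k, |x k| ^ p) ^ (1 / p)

/-- The polar vector of `v` with respect to the ℓ_p norm. -/
noncomputable def polarVec {d : ℕ} (p : ℝ) (v : Fin d → ℝ) : Fin d → ℝ :=
  if v = 0 then 0
  else fun k => (|v k| / lpnorm p v) ^ (p - 1) * Real.sign (v k) * lpnorm p v

/-- The ℓ_p-angle between two vectors: the number in [0,π] whose cosine is
`(v·w)/(‖v‖_p ‖w‖_{p°})`. -/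
noncomputable def lpAngle {d : ℕ} (p : ℝ) (v w : Fin d → ℝ) : ℝ :=
  Real.arccos ((∑ k, v k * w k) / (lpnorm p v * lpnorm (p / (p - 1)) w))

/-! For small `|t|` the point `b + t • v` stays in the face `Fb ⊆ F`, because `b` lies in the
relative interior of `Fb` and `v` is parallel to it. Hence `t = 0` minimises
`t ↦ ωi ‖b + t v - a‖_{pi} + ωj ‖c - b - t v‖_{pj}`, and its derivative vanishes there.
The derivative of `t ↦ ‖x + t v‖_p` at `0` is `(x° · v) / ‖x‖_p`, and since `‖x°‖_{p°} = ‖x‖_p`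
this quotient is exactly `‖v‖_p cos φ_{p°}(x°, v) = ‖v‖_p cos φ_p(v, x°)`. -/

open Filter Topology

lemma Real.sign_mul_abs (r : ℝ) : Real.sign r * |r| = r := by
  rcases lt_trichotomy r 0 with h | rfl | h
  · rw [Real.sign_of_neg h, abs_of_neg h]; ring
  · simp
  · rw [Real.sign_of_pos h, abs_of_pos h]; ring

lemma mul_cos_arccos_div_mul {s N M : ℝ} (hN : 0 < N) (hM : 0 < M) (hs : |s| ≤ N * M) :
    M * Real.cos (Real.arccos (s / (N * M))) = s / N := by
  have hNM : 0 < N * M := mul_pos hN hM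
  rw [Real.cos_arccos ((le_div_iff₀ hNM).2 (by linarith [neg_abs_le s]))
    ((div_le_one hNM).2 ((le_abs_self s).trans hs))]
  field_simp

lemma eventually_add_smul_mem_of_mem_intrinsicInterior {E : Type*} [AddCommGroup E]
    [Module ℝ E] [TopologicalSpace E] [ContinuousAdd E] [ContinuousSMul ℝ E] {s : Set E} {b v : E}
    (hb : b ∈ intrinsicInterior ℝ s) (hv : v ∈ (affineSpan ℝ s).direction) :
    ∀ᶠ t : ℝ in 𝓝 0, b + t • v ∈ s := by
  obtain ⟨y, hy, rfl⟩ := mem_intrinsicInterior.1 hb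
  have hmem : ∀ t : ℝ, (y : E) + t • v ∈ affineSpan ℝ s := fun t => by
    simpa [add_comm] using
      AffineSubspace.vadd_mem_of_mem_direction (Submodule.smul_mem _ t hv) y.2
  let γ : ℝ → affineSpan ℝ s := fun t => ⟨y + t • v, hmem t⟩
  have hγ : Continuous γ := by fun_prop
  have hγ0 : γ 0 = y := Subtype.ext (by simp [γ])
  filter_upwards [hγ.continuousAt.preimage_mem_nhds (hγ0 ▸ mem_interior_iff_mem_nhds.1 hy)]
    with t ht using ht

section LpNorm

variable {d : ℕ} {p : ℝ} {x : Fin d → ℝ}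

lemma sum_abs_rpow_nonneg (p : ℝ) (x : Fin d → ℝ) : 0 ≤ ∑ k, |x k| ^ p :=
  Finset.sum_nonneg fun _ _ => Real.rpow_nonneg (abs_nonneg _) _

lemma sum_abs_rpow_pos (hx : x ≠ 0) : 0 < ∑ k, |x k| ^ p := by
  obtain ⟨k, hk⟩ := Function.ne_iff.1 hx
  exact Finset.sum_pos' (fun _ _ => Real.rpow_nonneg (abs_nonneg _) _)
    ⟨k, Finset.mem_univ k, Real.rpow_pos_of_pos (abs_pos.2 hk) p⟩

lemma lpnorm_pos (hx : x ≠ 0) : 0 < lpnorm p x :=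
  Real.rpow_pos_of_pos (sum_abs_rpow_pos hx) _

lemma lpnorm_rpow (hp : p ≠ 0) (x : Fin d → ℝ) : lpnorm p x ^ p = ∑ k, |x k| ^ p := by
  rw [lpnorm, ← Real.rpow_mul (sum_abs_rpow_nonneg p x), one_div, inv_mul_cancel₀ hp,
    Real.rpow_one]

lemma abs_sum_mul_le_lpnorm_mul {q : ℝ} (hpq : p.HolderConjugate q) (u w : Fin d → ℝ) :
    |∑ k, u k * w k| ≤ lpnorm p u * lpnorm q w := by
  have h := Real.inner_le_Lp_mul_Lq Finset.univ (fun k => |u k|) (fun k => |w k|) hpq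
  simp only [abs_abs, ← abs_mul] at h
  exact (Finset.abs_sum_le_sum_abs _ _).trans h

lemma polarVec_apply (hx : x ≠ 0) (k : Fin d) :
    polarVec p x k = lpnorm p x ^ (2 - p) * (|x k| ^ (p - 2) * x k) := by
  have hN := lpnorm_pos (p := p) hx
  rw [polarVec, if_neg hx]
  rcases eq_or_ne (x k) 0 with h0 | h0
  · simp [h0]
  · have hxk := abs_pos.2 h0
    rw [Real.div_rpow hxk.le hN.le, show p - 1 = (p - 2) + 1 by ring,
      Real.rpow_add_one hxk.ne', Real.rpow_add_one hN.ne', show 2 - p = -(p - 2) by ring,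
      Real.rpow_neg hN.le]
    field_simp
    linear_combination Real.sign_mul_abs (x k)

lemma lpnorm_polarVec (hp : 1 < p) (hx : x ≠ 0) :
    lpnorm (p / (p - 1)) (polarVec p x) = lpnorm p x := by
  set q := p / (p - 1)
  have hN := lpnorm_pos (p := p) hx
  have hp1 : p - 1 ≠ 0 := by linarith
  have hq : q ≠ 0 := by positivity
  have hpq : (p - 1) * q = p := mul_div_cancel₀ p hp1
  have habs : ∀ k, |polarVec p x k| ^ q = lpnorm p x ^ (q - p) * |x k| ^ p := by
    intro k
    rw [polarVec_apply hx, abs_mul, abs_mul, abs_of_pos (Real.rpow_pos_of_pos hN _),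
      abs_of_nonneg (Real.rpow_nonneg (abs_nonneg _) _),
      ← Real.rpow_add_one' (abs_nonneg _) (by linarith), show p - 2 + 1 = p - 1 by ring,
      Real.mul_rpow (by positivity) (by positivity), ← Real.rpow_mul hN.le,
      ← Real.rpow_mul (abs_nonneg _)]
    congr 2
    linear_combination -hpq
  rw [lpnorm, Finset.sum_congr rfl fun k _ => habs k, ← Finset.mul_sum,
    ← lpnorm_rpow (by positivity), ← Real.rpow_add hN, sub_add_cancel, ← Real.rpow_mul hN.le,
    mul_one_div_cancel hq, Real.rpow_one]

lemma hasDerivAt_sum_abs_add_smul_rpow (hp : 1 < p) (x v : Fin d → ℝ) :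
    HasDerivAt (fun t : ℝ => ∑ k, |(x + t • v) k| ^ p)
      (p * ∑ k, |x k| ^ (p - 2) * x k * v k) 0 := by
  rw [Finset.mul_sum]
  refine HasDerivAt.fun_sum fun k _ => ?_
  have hline : HasDerivAt (fun t : ℝ => (x + t • v) k) (v k) 0 := by
    simpa using ((hasDerivAt_id (0 : ℝ)).mul_const (v k)).const_add (x k)
  exact ((hasDerivAt_abs_rpow (x k) hp).comp_of_eq 0 hline (by simp)).congr_deriv (by ring)

lemma hasDerivAt_lpnorm_add_smul (hp : 1 < p) (hx : x ≠ 0) (v : Fin d → ℝ) :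
    HasDerivAt (fun t : ℝ => lpnorm p (x + t • v))
      ((∑ k, polarVec p x k * v k) / lpnorm p x) 0 := by
  have hS := sum_abs_rpow_pos (p := p) hx
  have hN := lpnorm_pos (p := p) hx
  have h := (hasDerivAt_sum_abs_add_smul_rpow hp x v).rpow_const (p := 1 / p)
    (Or.inl (by simpa using hS.ne'))
  refine h.congr_deriv ?_
  simp only [zero_smul, add_zero, polarVec_apply hx, mul_assoc, ← Finset.mul_sum]
  rw [← lpnorm_rpow (by linarith), ← Real.rpow_mul hN.le, show p * (1 / p - 1) = 1 - p by
    field_simp, show (2 : ℝ) - p = (1 - p) + 1 by ring, Real.rpow_add_one hN.ne']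
  field_simp

lemma holderConjugate_div_sub_one (hp : 1 < p) : p.HolderConjugate (p / (p - 1)) :=
  (Real.holderConjugate_iff_eq_conjExponent hp).2 rfl

lemma lpnorm_mul_cos_lpAngle_polarVec_left (hp : 1 < p) (hx : x ≠ 0) {v : Fin d → ℝ}
    (hv : v ≠ 0) :
    lpnorm p v * Real.cos (lpAngle (p / (p - 1)) (polarVec p x) v)
      = (∑ k, polarVec p x k * v k) / lpnorm p x := by
  have hqp : p / (p - 1) / (p / (p - 1) - 1) = p := by
    have : p - 1 ≠ 0 := by linarith
    field_simp; ring
  rw [lpAngle, hqp, lpnorm_polarVec hp hx]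
  refine mul_cos_arccos_div_mul (lpnorm_pos hx) (lpnorm_pos hv) ?_
  rw [← lpnorm_polarVec hp hx]
  exact abs_sum_mul_le_lpnorm_mul (holderConjugate_div_sub_one hp).symm _ _

lemma lpnorm_mul_cos_lpAngle_polarVec_right (hp : 1 < p) (hx : x ≠ 0) {v : Fin d → ℝ}
    (hv : v ≠ 0) :
    lpnorm p v * Real.cos (lpAngle p v (polarVec p x))
      = (∑ k, polarVec p x k * v k) / lpnorm p x := by
  rw [lpAngle, lpnorm_polarVec hp hx, mul_comm (lpnorm p v) (lpnorm p x)]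
  simp_rw [mul_comm (v _)]
  refine mul_cos_arccos_div_mul (lpnorm_pos hx) (lpnorm_pos hv) ?_
  rw [← lpnorm_polarVec hp hx]
  exact abs_sum_mul_le_lpnorm_mul (holderConjugate_div_sub_one hp).symm _ _

end LpNorm

theorem stmt_8_general {d : ℕ} (pi pj : ℝ) (hpi : 1 < pi) (hpj : 1 < pj)
    (ωi ωj : ℝ) (F : Set (Fin d → ℝ))
    (a c : Fin d → ℝ) (ha : a ∉ F) (hc : c ∉ F)
    (b : Fin d → ℝ) (hbF : b ∈ F)
    (hmin : ∀ y ∈ F, ωi * lpnorm pi (b - a) + ωj * lpnorm pj (c - b) ≤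
      ωi * lpnorm pi (y - a) + ωj * lpnorm pj (c - y))
    (Fb : Set (Fin d → ℝ)) (hFbface : IsExtreme ℝ F Fb)
    (hbrel : b ∈ intrinsicInterior ℝ Fb) :
    ∀ v : Fin d → ℝ, v ≠ 0 →
      (∃ f ∈ (affineSpan ℝ Fb : Set (Fin d → ℝ)),
        ∃ g ∈ (affineSpan ℝ Fb : Set (Fin d → ℝ)), v = f - g) →
      (ωi * lpnorm pi v * Real.cos (lpAngle (pi / (pi - 1)) (polarVec pi (b - a)) v)
          = ωj * lpnorm pj v * Real.cos (lpAngle (pj / (pj - 1)) (polarVec pj (c - b)) v)) ∧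
      (ωi * lpnorm pi v * Real.cos (lpAngle pi v (polarVec pi (b - a)))
          = ωj * lpnorm pj v * Real.cos (lpAngle pj v (polarVec pj (c - b)))) := by
  rintro v hv ⟨f, hf, g, hg, hvfg⟩
  have hba : b - a ≠ 0 := sub_ne_zero.2 fun h => ha (h ▸ hbF)
  have hcb : c - b ≠ 0 := sub_ne_zero.2 fun h => hc (h ▸ hbF)
  have hvdir : v ∈ (affineSpan ℝ Fb).direction := by
    rw [hvfg]
    exact AffineSubspace.vsub_mem_direction hf hg
  have hlocmin : IsLocalMin
      (fun t : ℝ => ωi * lpnorm pi ((b - a) + t • v) + ωj * lpnorm pj ((c - b) + t • -v)) 0 := by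
    filter_upwards [eventually_add_smul_mem_of_mem_intrinsicInterior hbrel hvdir] with t ht
    simp only [zero_smul, add_zero, neg_zero, smul_neg,
      show b - a + t • v = b + t • v - a by abel, show c - b + -(t • v) = c - (b + t • v) by abel]
    exact hmin _ (hFbface.subset ht)
  have hcrit := hlocmin.hasDerivAt_eq_zero
    (((hasDerivAt_lpnorm_add_smul hpi hba v).const_mul ωi).add
      ((hasDerivAt_lpnorm_add_smul hpj hcb (-v)).const_mul ωj))
  simp only [Pi.neg_apply, mul_neg, Finset.sum_neg_distrib, neg_div] at hcrit
  constructor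
  · rw [mul_assoc, mul_assoc, lpnorm_mul_cos_lpAngle_polarVec_left hpi hba hv,
      lpnorm_mul_cos_lpAngle_polarVec_left hpj hcb hv]
    linear_combination hcrit
  · rw [mul_assoc, mul_assoc, lpnorm_mul_cos_lpAngle_polarVec_right hpi hba hv,
      lpnorm_mul_cos_lpAngle_polarVec_right hpj hcb hv]
    linear_combination hcrit

/-- Generalized Snell's law (Snell's-like local optimality criterion for gate points),
cosine form. -/
theorem stmt_8 {d : ℕ} (pi pj : ℝ) (hpi : 1 < pi) (hpj : 1 < pj)
    (ωi ωj : ℝ) (hωi : 0 < ωi) (hωj : 0 < ωj)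
    (S : Finset (Fin d → ℝ)) (F : Set (Fin d → ℝ))
    (hF : F = convexHull ℝ (S : Set (Fin d → ℝ)))
    (a c : Fin d → ℝ) (ha : a ∉ F) (hc : c ∉ F)
    (b : Fin d → ℝ) (hbF : b ∈ F)
    (hmin : ∀ y ∈ F, ωi * lpnorm pi (b - a) + ωj * lpnorm pj (c - b) ≤
      ωi * lpnorm pi (y - a) + ωj * lpnorm pj (c - y))
    (Fb : Set (Fin d → ℝ)) (hFbconv : Convex ℝ Fb) (hFbface : IsExtreme ℝ F Fb)
    (hbrel : b ∈ intrinsicInterior ℝ Fb) :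
    ∀ v : Fin d → ℝ, v ≠ 0 →
      (∃ f ∈ (affineSpan ℝ Fb : Set (Fin d → ℝ)),
        ∃ g ∈ (affineSpan ℝ Fb : Set (Fin d → ℝ)), v = f - g) →
      (ωi * lpnorm pi v * Real.cos (lpAngle (pi / (pi - 1)) (polarVec pi (b - a)) v)
          = ωj * lpnorm pj v * Real.cos (lpAngle (pj / (pj - 1)) (polarVec pj (c - b)) v)) ∧
      (ωi * lpnorm pi v * Real.cos (lpAngle pi v (polarVec pi (b - a)))
          = ωj * lpnorm pj v * Real.cos (lpAngle pj v (polarVec pj (c - b)))) :=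
  stmt_8_general pi pj hpi hpj ωi ωj F a c ha hc b hbF hmin Fb hFbface hbrel
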